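/- Softmax PG lower bound with exact gradients: let η ∈ (0,1] and define θ_{t+1} := θ_t + η·d(π_{θ_t}ᵀ r)/dθ_t for all t ≥ 1 from an arbitrary θ_1 ∈ ℝ^K. If the sub-optimality converges to zero, i.e. (π* − π_{θ_t})ᵀ r → 0 as t → ∞, then there exists T ≥ 1 such that for all t ≥ T, (π* − π_{θ_t})ᵀ r ≥ Δ²/(6·t). -/

import Mathlib

open Finset Real Filter

/-- Softmax policy: `π_θ(a) = exp(θ(a)) / Σ_{a'} exp(θ(a'))`. -/
noncomputable def softmax {K : ℕ} (θ : Fin K → ℝ) (a : Fin K) : ℝ :=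
  Real.exp (θ a) / ∑ a', Real.exp (θ a')

/-- Expected reward `π_θᵀ r`. -/
noncomputable def expReward {K : ℕ} (r θ : Fin K → ℝ) : ℝ :=
  ∑ a, softmax θ a * r a

/-- Policy gradient component `(d π_θᵀ r / dθ)(a) = π_θ(a)·(r(a) − π_θᵀ r)`. -/
noncomputable def pgrad {K : ℕ} (r θ : Fin K → ℝ) (a : Fin K) : ℝ :=
  softmax θ a * (r a - expReward r θ)

/-!
Write `g = ∇(π_θᵀ r)` and `δ = r(a*) − π_θᵀ r`. Along the line `θ + s g` the second derivative of
the expected reward is the third central moment `E[(g − E g)² (r − E r)] ≤ ‖g‖²`, so a step of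
size `η ≤ 1` gains at most `(η + η²/2)‖g‖² ≤ 3/2 ‖g‖²`. Splitting `‖g‖²` into the `a*`
coordinate (at most `δ²`) and the rest (at most `(1 − π_θ(a*))² ≤ δ²/Δ²`) gives
`δ_{t+1} ≥ δ_t − (3/Δ²) δ_t²`. Once `δ_t` is small, `1/δ_t` then grows by at most `3c/2` per
step with `c = 3/Δ²`, while `2c(t + 1)` grows by `2c`; hence eventually `1/δ_t ≤ 2c(t + 1)`.
-/

theorem le_add_mul_deriv_add_sq_of_deriv2_le {f f' f'' : ℝ → ℝ} {M x y : ℝ}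
    (hf : ∀ s, HasDerivAt f (f' s) s) (hf' : ∀ s, HasDerivAt f' (f'' s) s)
    (hM : ∀ s, f'' s ≤ M) (hxy : x ≤ y) :
    f y ≤ f x + (y - x) * f' x + M / 2 * (y - x) ^ 2 := by
  have hline : ∀ s, HasDerivAt (fun s => f' x + M * (s - x)) M s := fun s => by
    simpa using (((hasDerivAt_id' s).sub_const x).const_mul M).const_add (f' x)
  have hquad : ∀ s, HasDerivAt (fun s => f x + (s - x) * f' x + M / 2 * (s - x) ^ 2)
      (f' x + M * (s - x)) s := fun s => by
    have := ((((hasDerivAt_id' s).sub_const x).mul_const (f' x)).const_add (f x)).fun_add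
      ((((hasDerivAt_id' s).sub_const x).fun_pow 2).const_mul (M / 2))
    exact this.congr_deriv (by push_cast; ring)
  have hderiv_le : ∀ s ∈ Set.Icc x y, f' s ≤ f' x + M * (s - x) :=
    image_le_of_deriv_right_le_deriv_boundary
      (fun s _ => (hf' s).continuousAt.continuousWithinAt)
      (fun s _ => (hf' s).hasDerivWithinAt) (by simp)
      (fun s _ => (hline s).continuousAt.continuousWithinAt)
      (fun s _ => (hline s).hasDerivWithinAt) (fun s _ => hM s)
  exact image_le_of_deriv_right_le_deriv_boundary
      (fun s _ => (hf s).continuousAt.continuousWithinAt)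
      (fun s _ => (hf s).hasDerivWithinAt) (by simp)
      (fun s _ => (hquad s).continuousAt.continuousWithinAt)
      (fun s _ => (hquad s).hasDerivWithinAt) (fun s hs => hderiv_le s (Set.Ico_subset_Icc_self hs))
      (Set.right_mem_Icc.2 hxy)

section Softmax

variable {K : ℕ}

theorem expReward_eq_div (X θ : Fin K → ℝ) :
    expReward X θ = (∑ a, exp (θ a) * X a) / ∑ a, exp (θ a) := by
  simp only [expReward, softmax, sum_div, div_mul_eq_mul_div]

/-- `Cov_{π_θ}(X, Y)`. -/
noncomputable def expCov (X Y θ : Fin K → ℝ) : ℝ :=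
  expReward (fun a => X a * Y a) θ - expReward X θ * expReward Y θ

theorem expCov_pgrad (r θ : Fin K → ℝ) : expCov (pgrad r θ) r θ = ∑ a, pgrad r θ a ^ 2 := by
  simp only [expCov, expReward, sum_mul, ← sum_sub_distrib, pgrad]
  exact sum_congr rfl fun a _ => by ring

variable [NeZero K]

theorem sum_exp_pos (θ : Fin K → ℝ) : 0 < ∑ a, exp (θ a) :=
  sum_pos (fun _ _ => exp_pos _) univ_nonempty

theorem softmax_pos (θ : Fin K → ℝ) (a : Fin K) : 0 < softmax θ a :=
  div_pos (exp_pos _) (sum_exp_pos θ)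

theorem sum_softmax (θ : Fin K → ℝ) : ∑ a, softmax θ a = 1 := by
  simp only [softmax, ← sum_div, div_self (sum_exp_pos θ).ne']

theorem softmax_le_one (θ : Fin K → ℝ) (a : Fin K) : softmax θ a ≤ 1 :=
  sum_softmax θ ▸ single_le_sum (fun b _ => (softmax_pos θ b).le) (mem_univ a)

theorem expReward_const (θ : Fin K → ℝ) (c : ℝ) : expReward (fun _ => c) θ = c := by
  rw [expReward, ← sum_mul, sum_softmax, one_mul]

theorem expReward_nonneg {X : Fin K → ℝ} (hX : ∀ a, 0 ≤ X a) (θ : Fin K → ℝ) :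
    0 ≤ expReward X θ :=
  sum_nonneg fun a _ => mul_nonneg (softmax_pos θ a).le (hX a)

theorem expReward_le_one {X : Fin K → ℝ} (hX : ∀ a, X a ≤ 1) (θ : Fin K → ℝ) :
    expReward X θ ≤ 1 :=
  expReward_const θ 1 ▸ sum_le_sum fun a _ =>
    mul_le_mul_of_nonneg_left (hX a) (softmax_pos θ a).le

theorem hasDerivAt_expReward_line (X θ g : Fin K → ℝ) (s : ℝ) :
    HasDerivAt (fun s => expReward X (fun a => θ a + s * g a))
      (expCov g X (fun a => θ a + s * g a)) s := by
  have hexp : ∀ a, HasDerivAt (fun s => exp (θ a + s * g a)) (exp (θ a + s * g a) * g a) s :=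
    fun a => by simpa using (((hasDerivAt_id' s).mul_const (g a)).const_add (θ a)).exp
  have hN := HasDerivAt.fun_sum fun a (_ : a ∈ univ) => (hexp a).mul_const (X a)
  have hD := HasDerivAt.fun_sum fun a (_ : a ∈ univ) => hexp a
  have hD0 := (sum_exp_pos fun a => θ a + s * g a).ne'
  simp only [expCov, expReward_eq_div]
  refine (hN.fun_div hD hD0).congr_deriv ?_
  field_simp

theorem hasDerivAt_expCov_line (X θ g : Fin K → ℝ) (s : ℝ) :
    HasDerivAt (fun s => expCov g X (fun a => θ a + s * g a))
      (expCov g (fun a => g a * X a) (fun a => θ a + s * g a)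
        - (expCov g g (fun a => θ a + s * g a) * expReward X (fun a => θ a + s * g a)
          + expReward g (fun a => θ a + s * g a) * expCov g X (fun a => θ a + s * g a))) s :=
  (hasDerivAt_expReward_line _ θ g s).sub
    ((hasDerivAt_expReward_line g θ g s).mul (hasDerivAt_expReward_line X θ g s))

theorem expCov_sub_le_sum_sq {r : Fin K → ℝ} (hr0 : ∀ a, 0 ≤ r a) (hr1 : ∀ a, r a ≤ 1)
    (θ g : Fin K → ℝ) :
    expCov g (fun a => g a * r a) θ - (expCov g g θ * expReward r θ + expReward g θ * expCov g r θ)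
      ≤ ∑ a, g a ^ 2 := by
  have hρ0 : 0 ≤ expReward r θ := expReward_nonneg hr0 θ
  have hp1 : ∑ a, softmax θ a = 1 := sum_softmax θ
  simp only [expCov, expReward] at hρ0 ⊢
  set p := softmax θ
  set m := ∑ a, p a * g a
  set ρ := ∑ a, p a * r a
  have third_moment : ∑ a, p a * ((g a - m) ^ 2 * (r a - ρ)) = ∑ a, p a * (g a * (g a * r a))
      - m * ∑ a, p a * (g a * r a) - ((∑ a, p a * (g a * g a) - m * m) * ρ
        + m * (∑ a, p a * (g a * r a) - m * ρ)) := by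
    have expand : ∀ a, p a * ((g a - m) ^ 2 * (r a - ρ)) = p a * (g a * (g a * r a))
        - 2 * m * (p a * (g a * r a)) + m ^ 2 * (p a * r a) - ρ * (p a * (g a * g a))
        + 2 * m * ρ * (p a * g a) - m ^ 2 * ρ * p a := fun a => by ring
    simp only [sum_congr rfl fun a _ => expand a, sum_add_distrib, sum_sub_distrib, ← mul_sum, hp1]
    ring
  have variance : ∑ a, p a * (g a - m) ^ 2 = ∑ a, p a * g a ^ 2 - m ^ 2 := by
    have expand : ∀ a, p a * (g a - m) ^ 2 = p a * g a ^ 2 - 2 * m * (p a * g a) + m ^ 2 * p a :=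
      fun a => by ring
    simp only [sum_congr rfl fun a _ => expand a, sum_add_distrib, sum_sub_distrib, ← mul_sum, hp1]
    ring
  calc _ = ∑ a, p a * ((g a - m) ^ 2 * (r a - ρ)) := third_moment.symm
    _ ≤ ∑ a, p a * (g a - m) ^ 2 := sum_le_sum fun a _ => mul_le_mul_of_nonneg_left
        (mul_le_of_le_one_right (sq_nonneg _) (by linarith [hr1 a])) (softmax_pos θ a).le
    _ ≤ ∑ a, p a * g a ^ 2 := by rw [variance]; linarith [sq_nonneg m]
    _ ≤ ∑ a, g a ^ 2 := sum_le_sum fun a _ =>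
        mul_le_of_le_one_left (sq_nonneg _) (softmax_le_one θ a)

theorem expReward_gradient_step_le {r : Fin K → ℝ} (hr0 : ∀ a, 0 ≤ r a) (hr1 : ∀ a, r a ≤ 1)
    (θ : Fin K → ℝ) {η : ℝ} (hη : 0 ≤ η) :
    expReward r (fun a => θ a + η * pgrad r θ a)
      ≤ expReward r θ + (η + η ^ 2 / 2) * ∑ a, pgrad r θ a ^ 2 := by
  have taylor := le_add_mul_deriv_add_sq_of_deriv2_le
    (fun s => hasDerivAt_expReward_line r θ (pgrad r θ) s)
    (fun s => hasDerivAt_expCov_line r θ (pgrad r θ) s)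
    (fun s => expCov_sub_le_sum_sq hr0 hr1 _ (pgrad r θ)) hη
  simp only [zero_mul, add_zero, sub_zero, expCov_pgrad] at taylor
  linarith

theorem sub_expReward_eq_sum (r θ : Fin K → ℝ) (astar : Fin K) :
    r astar - expReward r θ = ∑ a, softmax θ a * (r astar - r a) := by
  simp only [expReward, mul_sub, sum_sub_distrib, ← sum_mul, sum_softmax, one_mul]

theorem one_sub_softmax_mul_le_sub_expReward {r : Fin K → ℝ} {astar : Fin K} {Δ : ℝ}
    (hgap : ∀ a, a ≠ astar → Δ ≤ r astar - r a) (θ : Fin K → ℝ) :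
    (1 - softmax θ astar) * Δ ≤ r astar - expReward r θ := by
  rw [← sum_softmax θ, ← sum_erase_eq_sub (mem_univ astar), sum_mul, sub_expReward_eq_sum,
    ← sum_erase univ (f := fun a => softmax θ a * (r astar - r a)) (a := astar) (by simp)]
  exact sum_le_sum fun a ha => mul_le_mul_of_nonneg_left (hgap a (ne_of_mem_erase ha))
    (softmax_pos θ a).le

theorem sub_expReward_pos [Nontrivial (Fin K)] {r : Fin K → ℝ} {astar : Fin K}
    (hstar : ∀ a, a ≠ astar → r a < r astar) (θ : Fin K → ℝ) :
    0 < r astar - expReward r θ := by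
  obtain ⟨b, hb⟩ := exists_ne astar
  rw [sub_expReward_eq_sum]
  refine sum_pos' (fun a _ => ?_) ⟨b, mem_univ b, ?_⟩
  · rcases eq_or_ne a astar with rfl | ha
    · simp
    · exact mul_nonneg (softmax_pos θ a).le (sub_nonneg.2 (hstar a ha).le)
  · exact mul_pos (softmax_pos θ b) (sub_pos.2 (hstar b hb))

theorem sum_sq_pgrad_le {r : Fin K → ℝ} (hr0 : ∀ a, 0 ≤ r a) (hr1 : ∀ a, r a ≤ 1)
    (θ : Fin K → ℝ) (astar : Fin K) :
    ∑ a, pgrad r θ a ^ 2 ≤ (r astar - expReward r θ) ^ 2 + (1 - softmax θ astar) ^ 2 := by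
  have hρ0 := expReward_nonneg hr0 θ
  have hρ1 := expReward_le_one hr1 θ
  have hstar : pgrad r θ astar ^ 2 ≤ (r astar - expReward r θ) ^ 2 := by
    rw [pgrad, mul_pow]
    exact mul_le_of_le_one_left (sq_nonneg _) (pow_le_one₀ (softmax_pos θ astar).le
      (softmax_le_one θ astar))
  have hrest : ∑ a ∈ univ.erase astar, pgrad r θ a ^ 2 ≤ (1 - softmax θ astar) ^ 2 := by
    rw [← sum_softmax θ, ← sum_erase_eq_sub (mem_univ astar)]
    refine le_trans (sum_le_sum fun a _ => ?_)
      (sum_sq_le_sq_sum_of_nonneg fun a _ => (softmax_pos θ a).le)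
    rw [pgrad, mul_pow]
    refine mul_le_of_le_one_right (sq_nonneg _) ?_
    nlinarith [hr0 a, hr1 a]
  rw [← add_sum_erase _ _ (mem_univ astar)]
  linarith

theorem sub_mul_sq_le_sub_expReward_gradient_step {r : Fin K → ℝ} (hr0 : ∀ a, 0 ≤ r a)
    (hr1 : ∀ a, r a ≤ 1) {astar : Fin K} {Δ : ℝ} (hΔ0 : 0 < Δ) (hΔ1 : Δ ≤ 1)
    (hgap : ∀ a, a ≠ astar → Δ ≤ r astar - r a) (θ : Fin K → ℝ) {η : ℝ} (hη0 : 0 ≤ η)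
    (hη1 : η ≤ 1) :
    (r astar - expReward r θ) - 3 / Δ ^ 2 * (r astar - expReward r θ) ^ 2
      ≤ r astar - expReward r (fun a => θ a + η * pgrad r θ a) := by
  set d := r astar - expReward r θ
  set G := ∑ a, pgrad r θ a ^ 2
  have hG0 : 0 ≤ G := sum_nonneg fun a _ => sq_nonneg _
  have hascent := expReward_gradient_step_le hr0 hr1 θ hη0
  have hπ : ((1 - softmax θ astar) * Δ) ^ 2 ≤ d ^ 2 :=
    pow_le_pow_left₀ (mul_nonneg (sub_nonneg.2 (softmax_le_one θ astar)) hΔ0.le)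
      (one_sub_softmax_mul_le_sub_expReward hgap θ) 2
  have hGΔ : G * Δ ^ 2 ≤ 2 * d ^ 2 := by
    have hΔsq : Δ ^ 2 ≤ 1 := pow_le_one₀ hΔ0.le hΔ1
    nlinarith [mul_le_mul_of_nonneg_right (sum_sq_pgrad_le hr0 hr1 θ astar) (sq_nonneg Δ),
      mul_le_mul_of_nonneg_left hΔsq (sq_nonneg d)]
  have hG : (η + η ^ 2 / 2) * G ≤ 3 / Δ ^ 2 * d ^ 2 := by
    rw [div_mul_eq_mul_div, le_div_iff₀ (by positivity)]
    nlinarith [mul_le_mul_of_nonneg_right (show η + η ^ 2 / 2 ≤ 3 / 2 by nlinarith) hG0]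
  linarith

end Softmax

theorem exists_sSup_image_ne_eq {ι : Type*} [Finite ι] [Nontrivial ι] (f : ι → ℝ) (i : ι) :
    ∃ j, j ≠ i ∧ sSup (f '' {a | a ≠ i}) = f j ∧ ∀ a, a ≠ i → f a ≤ f j := by
  obtain ⟨j, hj, hmax⟩ := Set.exists_max_image {a | a ≠ i} f (Set.toFinite _) (exists_ne i)
  exact ⟨j, hj, IsGreatest.csSup_eq ⟨⟨j, hj, rfl⟩, by rintro _ ⟨a, ha, rfl⟩; exact hmax a ha⟩, hmax⟩

theorem inv_le_inv_add_of_sub_mul_sq_le {c d d' : ℝ} (hc : 0 ≤ c) (hd : 0 < d)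
    (hcd : c * d ≤ 1 / 3) (h : d - c * d ^ 2 ≤ d') : d'⁻¹ ≤ d⁻¹ + 3 / 2 * c := by
  have hd' : 0 < d' := by nlinarith
  have hmul : d ≤ d' * (1 + 3 / 2 * c * d) := by
    nlinarith [mul_le_mul_of_nonneg_right h (by positivity : 0 ≤ 1 + 3 / 2 * c * d),
      mul_nonneg (mul_nonneg hc (sq_nonneg d)) (by linarith : 0 ≤ 1 - 3 * (c * d))]
  rw [← sub_nonneg]
  have : d⁻¹ + 3 / 2 * c - d'⁻¹ = (d' * (1 + 3 / 2 * c * d) - d) / (d * d') := by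
    field_simp
  rw [this]
  exact div_nonneg (by linarith) (by positivity)

theorem exists_one_div_le_of_sub_mul_sq_le {c : ℝ} (hc : 0 < c) {d : ℕ → ℝ} (hpos : ∀ t, 0 < d t)
    (hstep : ∀ t, d t - c * d t ^ 2 ≤ d (t + 1)) (hconv : Tendsto d atTop (nhds 0)) :
    ∃ T : ℕ, ∀ t ≥ T, 1 / (2 * c * ((t : ℝ) + 1)) ≤ d t := by
  obtain ⟨T₀, hsmall⟩ := eventually_atTop.1 ((hconv.const_mul c).eventually_le_const
    (show c * 0 < 1 / 3 by norm_num))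
  have hgrowth : ∀ n : ℕ, (d (T₀ + n))⁻¹ ≤ (d T₀)⁻¹ + n * (3 / 2 * c) := by
    intro n
    induction n with
    | zero => simp
    | succ n ih =>
      have := inv_le_inv_add_of_sub_mul_sq_le hc.le (hpos _) (hsmall _ (by omega))
        (hstep (T₀ + n))
      rw [← add_assoc]
      push_cast
      linarith
  obtain ⟨N, hN⟩ := exists_nat_ge ((d T₀)⁻¹ / (c / 2))
  refine ⟨max T₀ N, fun t ht => ?_⟩
  obtain ⟨n, rfl⟩ := Nat.exists_eq_add_of_le (le_of_max_le_left ht)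
  have hN' : (d T₀)⁻¹ ≤ c / 2 * ((T₀ + n : ℕ) : ℝ) := by
    rw [div_le_iff₀ (by positivity)] at hN
    have : (N : ℝ) ≤ ((T₀ + n : ℕ) : ℝ) := by exact_mod_cast le_of_max_le_right ht
    nlinarith
  rw [div_le_iff₀ (by positivity), ← div_le_iff₀' (hpos _), one_div]
  have := hgrowth n
  push_cast at hN' ⊢
  nlinarith

/-- Softmax PG lower bound with exact gradients: if the sub-optimality converges to
zero then, for all sufficiently large `t`, `(π* − π_{θ_t})ᵀ r ≥ Δ²/(6·t)`.
Here `θ 0` is the paper's `θ_1`, so the paper's `θ_t` is `θ (t-1)` and the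
bound `Δ²/(6·t)` becomes `Δ²/(6·(t+1))`. -/
theorem softmax_pg_true_gradient_lower_bound
    {K : ℕ} (hK : 2 ≤ K) (r : Fin K → ℝ)
    (hr : ∀ a, 0 < r a ∧ r a ≤ 1)
    (astar : Fin K) (hstar : ∀ a, a ≠ astar → r a < r astar)
    (Δ : ℝ) (hΔ : Δ = r astar - sSup (r '' {a | a ≠ astar}))
    (η : ℝ) (hη : 0 < η) (hη1 : η ≤ 1)
    (θ : ℕ → Fin K → ℝ)
    (hupd : ∀ t, θ (t + 1) = fun a => θ t a + η * pgrad r (θ t) a)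
    (hconv : Tendsto (fun t => r astar - expReward r (θ t)) atTop (nhds 0)) :
    ∃ T : ℕ, ∀ t ≥ T, Δ ^ 2 / (6 * ((t : ℝ) + 1)) ≤ r astar - expReward r (θ t) := by
  have : NeZero K := ⟨by omega⟩
  have : Nontrivial (Fin K) := Fin.nontrivial_iff_two_le.2 hK
  obtain ⟨b, hb, hsup, hmax⟩ := exists_sSup_image_ne_eq r astar
  rw [hsup] at hΔ
  have hgap : ∀ a, a ≠ astar → Δ ≤ r astar - r a := fun a ha => by linarith [hmax a ha]
  have hΔ0 : 0 < Δ := by linarith [hstar b hb]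
  have hΔ1 : Δ ≤ 1 := by linarith [(hr b).1, (hr astar).2]
  have hstep : ∀ t, (r astar - expReward r (θ t)) - 3 / Δ ^ 2 * (r astar - expReward r (θ t)) ^ 2
      ≤ r astar - expReward r (θ (t + 1)) := fun t => hupd t ▸
    sub_mul_sq_le_sub_expReward_gradient_step (fun a => (hr a).1.le) (fun a => (hr a).2)
      hΔ0 hΔ1 hgap (θ t) hη.le hη1
  obtain ⟨T, hT⟩ := exists_one_div_le_of_sub_mul_sq_le (by positivity)
    (fun t => sub_expReward_pos hstar (θ t)) hstep hconv
  refine ⟨T, fun t ht => le_of_eq_of_le ?_ (hT t ht)⟩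
  field_simp
  ring
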